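/- Let (X,d) be a metric space, G ⊆ X, and Π : X → G a map such that: (i) d(x,y) ≤ 1 implies d(Π x, Π y) ≤ a, and (ii) if d(x, Π x) ≥ a and d(x,y) ≤ b·d(x, Π x) then d(Π x, Π y) ≤ a, where a ≥ 1 and b > 0 are fixed constants. Then for every p > a and every 1-Lipschitz path θ : [0,s] → X whose image is disjoint from the p-neighborhood of G, the diameter of Π(θ([0,s])) is at most a·s/(b·p) + a. -/

import Mathlib

/-!
Far from `G`, property (ii) says that moving by at most `b * p` moves the projection by at
most `a`. Since `θ` is 1-Lipschitz, any two parameters at distance `ℓ` are joined by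
`⌈ℓ / (b * p)⌉` such moves, each changing the projection by at most `a`.
-/

open Set Metric

section Chaining

variable {α : Type*} [PseudoMetricSpace α] {f : ℝ → α} {S : Set ℝ} {δ a : ℝ}

theorem dist_le_natCast_mul_of_forall_dist_le [S.OrdConnected] (hδ : 0 ≤ δ)
    (hf : ∀ u ∈ S, ∀ v ∈ S, dist u v ≤ δ → dist (f u) (f v) ≤ a) (n : ℕ) :
    ∀ u ∈ S, ∀ v ∈ S, u ≤ v → v - u ≤ n * δ → dist (f u) (f v) ≤ n * a := by
  induction n with
  | zero =>
    intro u _ v _ huv hvu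
    obtain rfl : u = v := le_antisymm huv (by simpa using hvu)
    simp
  | succ n ih =>
    intro u hu v hv huv hvu
    set w := max u (v - δ) with hw_def
    have hwu : u ≤ w := le_max_left _ _
    have hwv : w ≤ v := max_le huv (by linarith)
    have hwS : w ∈ S := Set.OrdConnected.out ‹_› hu hv ⟨hwu, hwv⟩
    have hfuw : dist (f u) (f w) ≤ n * a := by
      refine ih u hu w hwS hwu ?_
      rcases le_total u (v - δ) with h | h
      · rw [hw_def, max_eq_right h]; push_cast at hvu; linarith
      · rw [hw_def, max_eq_left h, sub_self]; positivity
    have hfwv : dist (f w) (f v) ≤ a :=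
      hf w hwS v hv <| by
        rw [Real.dist_eq, abs_of_nonpos (by linarith)]
        linarith [le_max_right u (v - δ)]
    calc dist (f u) (f v) ≤ dist (f u) (f w) + dist (f w) (f v) := dist_triangle _ _ _
      _ ≤ n * a + a := add_le_add hfuw hfwv
      _ = (n + 1 : ℕ) * a := by push_cast; ring

theorem dist_le_mul_div_add_of_forall_dist_le [S.OrdConnected] (hδ : 0 < δ) (ha : 0 ≤ a)
    (hf : ∀ u ∈ S, ∀ v ∈ S, dist u v ≤ δ → dist (f u) (f v) ≤ a)
    {u v : ℝ} (hu : u ∈ S) (hv : v ∈ S) (huv : u ≤ v) :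
    dist (f u) (f v) ≤ a * (v - u) / δ + a := by
  have hceil : v - u ≤ ⌈(v - u) / δ⌉₊ * δ := (div_le_iff₀ hδ).1 (Nat.le_ceil _)
  have hceil' : (⌈(v - u) / δ⌉₊ : ℝ) ≤ (v - u) / δ + 1 :=
    (Nat.ceil_lt_add_one (div_nonneg (sub_nonneg.2 huv) hδ.le)).le
  calc dist (f u) (f v) ≤ ⌈(v - u) / δ⌉₊ * a :=
        dist_le_natCast_mul_of_forall_dist_le hδ.le hf _ u hu v hv huv hceil
    _ ≤ ((v - u) / δ + 1) * a := mul_le_mul_of_nonneg_right hceil' ha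
    _ = a * (v - u) / δ + a := by ring

theorem diam_image_le_of_forall_dist_le [S.OrdConnected] (hS : Bornology.IsBounded S)
    (hδ : 0 < δ) (ha : 0 ≤ a) (hf : ∀ u ∈ S, ∀ v ∈ S, dist u v ≤ δ → dist (f u) (f v) ≤ a) :
    diam (f '' S) ≤ a * diam S / δ + a := by
  have hbound : ∀ u ∈ S, ∀ v ∈ S, u ≤ v → dist (f u) (f v) ≤ a * diam S / δ + a := by
    intro u hu v hv huv
    have hvu : v - u ≤ diam S := by
      simpa [Real.dist_eq, abs_of_nonpos (sub_nonpos.2 huv)] using dist_le_diam_of_mem hS hu hv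
    calc dist (f u) (f v) ≤ a * (v - u) / δ + a :=
          dist_le_mul_div_add_of_forall_dist_le hδ ha hf hu hv huv
      _ ≤ a * diam S / δ + a := by gcongr
  refine diam_le_of_forall_dist_le (by positivity) ?_
  rintro _ ⟨u, hu, rfl⟩ _ ⟨v, hv, rfl⟩
  rcases le_total u v with h | h
  · exact hbound u hu v hv h
  · rw [dist_comm]; exact hbound v hv u hu h

end Chaining

theorem dist_proj_le_of_lt_infDist {X : Type*} [PseudoMetricSpace X] {G : Set X}
    {proj : X → X} (hprojG : ∀ x, proj x ∈ G) {a b p : ℝ}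
    (h2 : ∀ x y : X, a ≤ dist x (proj x) → dist x y ≤ b * dist x (proj x) →
      dist (proj x) (proj y) ≤ a)
    (hap : a ≤ p) (hb : 0 ≤ b) {x y : X} (hx : p < infDist x G) (hxy : dist x y ≤ b * p) :
    dist (proj x) (proj y) ≤ a := by
  have hd : p < dist x (proj x) := hx.trans_le (infDist_le_dist_of_mem (hprojG x))
  exact h2 x y (hap.trans hd.le) (hxy.trans (mul_le_mul_of_nonneg_left hd.le hb))

theorem coarse_contraction_diam_general {X : Type*} [MetricSpace X]
    (G : Set X) (proj : X → X) (hprojG : ∀ x, proj x ∈ G)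
    (a b : ℝ) (ha : 1 ≤ a) (hb : 0 < b)
    (h2 : ∀ x y : X, a ≤ dist x (proj x) → dist x y ≤ b * dist x (proj x) →
      dist (proj x) (proj y) ≤ a)
    (p : ℝ) (hp : a < p)
    (s : ℝ) (hs : 0 ≤ s) (θ : ℝ → X)
    (hθ : LipschitzOnWith 1 θ (Set.Icc 0 s))
    (hfar : ∀ u ∈ Set.Icc (0:ℝ) s, p < Metric.infDist (θ u) G) :
    Metric.diam (proj '' (θ '' Set.Icc 0 s)) ≤ a * s / (b * p) + a := by
  have hstep : ∀ u ∈ Icc 0 s, ∀ v ∈ Icc 0 s, dist u v ≤ b * p →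
      dist (proj (θ u)) (proj (θ v)) ≤ a := by
    intro u hu v hv huv
    have hθuv : dist (θ u) (θ v) ≤ dist u v := by simpa using hθ.dist_le_mul u hu v hv
    exact dist_proj_le_of_lt_infDist hprojG h2 hp.le hb.le (hfar u hu) (hθuv.trans huv)
  have hdiam := diam_image_le_of_forall_dist_le (isBounded_Icc 0 s)
    (mul_pos hb (by linarith)) (by linarith) hstep
  rw [image_image]
  rwa [Real.diam_Icc hs, sub_zero] at hdiam

/-- Coarse contraction estimate for projections: a 1-Lipschitz path staying at
distance more than p from G has projection image of diameter at most a·s/(b·p)+a. -/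
theorem coarse_contraction_diam {X : Type*} [MetricSpace X]
    (G : Set X) (proj : X → X) (hprojG : ∀ x, proj x ∈ G)
    (a b : ℝ) (ha : 1 ≤ a) (hb : 0 < b)
    (h1 : ∀ x y : X, dist x y ≤ 1 → dist (proj x) (proj y) ≤ a)
    (h2 : ∀ x y : X, a ≤ dist x (proj x) → dist x y ≤ b * dist x (proj x) →
      dist (proj x) (proj y) ≤ a)
    (p : ℝ) (hp : a < p)
    (s : ℝ) (hs : 0 ≤ s) (θ : ℝ → X)
    (hθ : LipschitzOnWith 1 θ (Set.Icc 0 s))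
    (hfar : ∀ u ∈ Set.Icc (0:ℝ) s, p < Metric.infDist (θ u) G) :
    Metric.diam (proj '' (θ '' Set.Icc 0 s)) ≤ a * s / (b * p) + a :=
  coarse_contraction_diam_general G proj hprojG a b ha hb h2 p hp s hs θ hθ hfar
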